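/- arXiv:1403.4348 — 5 statements merged into one kernel-verified Lean document; each statement's English description precedes it below -/
import Mathlib

section
/- Let D be a division ring, k a field contained in the center of D (so that D is a k-algebra), and τ a k-linear ring anti-automorphism of D with τ ∘ τ = id. Let n and m be natural numbers, let K = k(t₁,…,tₙ) be the field of fractions of the polynomial ring in n variables over k, and let τ̃ denote the ring anti-automorphism τ ⊗ id_K of D ⊗_k K. Fix units α₁,…,α_m ∈ kˣ and integer vectors a₁,…,a_m ∈ ℤⁿ, aᵢ = (a_{i,1},…,a_{i,n}), whose images in (ℤ/2ℤ)ⁿ are pairwise distinct. Then the hermitian form h(x,y) = Σ_{i=1}^m αᵢ t₁^{a_{i,1}}⋯tₙ^{a_{i,n}} τ̃(xᵢ) yᵢ is anisotropic on (D ⊗_k K)^m: for every x = (x₁,…,x_m) ∈ (D ⊗_k K)^m, if Σ_{i=1}^m αᵢ t₁^{a_{i,1}}⋯tₙ^{a_{i,n}} τ̃(xᵢ) xᵢ = 0 in D ⊗_k K, then x₁ = ⋯ = x_m = 0. -/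
/-!
Clearing denominators, each `x i` becomes, up to a common central factor `1 ⊗ Q`, the image of
some `F i ∈ D[ℕⁿ]` under the injective algebra map `D[ℕⁿ] → D ⊗[k] K`, `Xᵘ d ↦ d ⊗ tᵘ`.
Multiplying the form also by a large power `(t₁ ⋯ tₙ)ᴺ`, the hypothesis becomes
`∑ i, αᵢ Xᵇⁱ τ(F i) (F i) = 0` in `D[ℕⁿ]` with `bᵢ = aᵢ + (N, …, N)`. For the lexicographic
order the `i`-th term has leading exponent `bᵢ + 2 deg (F i)` and leading coefficient
`αᵢ τ(c) c ≠ 0`. Two such exponents can only agree if `aᵢ ≡ aⱼ mod 2`, so the largest one occurs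
once and cannot cancel.
-/

open TensorProduct

namespace AddMonoidAlgebra

variable {R A B : Type*}

section MapCoeff

variable [Semiring R]

noncomputable def mapCoeff (τ : R →+ R) : AddMonoidAlgebra R A →+ AddMonoidAlgebra R A :=
  coeffAddEquiv.symm.toAddMonoidHom.comp
    ((Finsupp.mapRange.addMonoidHom τ).comp coeffAddEquiv.toAddMonoidHom)

@[simp]
lemma coeff_mapCoeff (τ : R →+ R) (f : AddMonoidAlgebra R A) :
    (mapCoeff τ f).coeff = f.coeff.mapRange τ τ.map_zero := rfl

@[simp]
lemma mapCoeff_single (τ : R →+ R) (a : A) (r : R) :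
    mapCoeff τ (single a r) = single a (τ r) := by
  ext; simp [mapCoeff]

lemma mapCoeff_injective {τ : R →+ R} (hτ : Function.Injective τ) :
    Function.Injective (mapCoeff (A := A) τ) :=
  coeffAddEquiv.symm.injective.comp
    ((Finsupp.mapRange_injective _ τ.map_zero hτ).comp coeffAddEquiv.injective)

lemma supDegree_mapCoeff [LinearOrder B] [OrderBot B] {D : A → B} {τ : R →+ R}
    (hτ : Function.Injective τ) (f : AddMonoidAlgebra R A) :
    (mapCoeff τ f).supDegree D = f.supDegree D := by
  simp only [supDegree, coeff_mapCoeff, Finsupp.support_mapRange_of_injective _ _ hτ]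

end MapCoeff

section Degree

variable [Ring R] [NoZeroDivisors R] [AddMonoid A] [LinearOrder B] [OrderBot B] [Add B]
  [AddLeftStrictMono B] [AddRightStrictMono B] {D : A → B}

lemma supDegree_mul_of_ne_zero (hD : D.Injective) (hadd : ∀ a₁ a₂, D (a₁ + a₂) = D a₁ + D a₂)
    {p q : AddMonoidAlgebra R A} (hp : p ≠ 0) (hq : q ≠ 0) :
    (p * q).supDegree D = p.supDegree D + q.supDegree D :=
  supDegree_mul hD hadd (mul_ne_zero ((leadingCoeff_ne_zero hD).2 hp)
    ((leadingCoeff_ne_zero hD).2 hq)) hp hq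

lemma mul_ne_zero_of_ne_zero (hD : D.Injective) (hadd : ∀ a₁ a₂, D (a₁ + a₂) = D a₁ + D a₂)
    {p q : AddMonoidAlgebra R A} (hp : p ≠ 0) (hq : q ≠ 0) : p * q ≠ 0 := by
  rw [← leadingCoeff_ne_zero hD, leadingCoeff_mul hD hadd]
  exact mul_ne_zero ((leadingCoeff_ne_zero hD).2 hp) ((leadingCoeff_ne_zero hD).2 hq)

theorem eq_zero_of_sum_single_mul_mapCoeff_mul_self_eq_zero {ι : Type*} [Fintype ι]
    (hD : D.Injective) (hadd : ∀ a₁ a₂, D (a₁ + a₂) = D a₁ + D a₂)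
    {τ : R →+ R} (hτ : Function.Injective τ) {b : ι → A} {c : ι → R} (hc : ∀ i, c i ≠ 0)
    (hb : ∀ i j u v, b i + (u + u) = b j + (v + v) → i = j) {F : ι → AddMonoidAlgebra R A}
    (hF : ∑ i, single (b i) (c i) * (mapCoeff τ (F i) * F i) = 0) (i : ι) : F i = 0 := by
  classical
  by_contra hFi
  set s := Finset.univ.filter fun i ↦ F i ≠ 0
  have hG : ∀ j ∈ s, single (b j) (c j) * (mapCoeff τ (F j) * F j) ≠ 0 ∧
      ∃ u, (single (b j) (c j) * (mapCoeff τ (F j) * F j)).supDegree D = D (b j + (u + u)) := by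
    intro j hj
    have hFj : F j ≠ 0 := (Finset.mem_filter.1 hj).2
    have hτFj : mapCoeff τ (F j) ≠ 0 := (map_ne_zero_iff _ (mapCoeff_injective hτ)).2 hFj
    have hsingle : single (b j) (c j) ≠ 0 := by simpa using hc j
    have hprod := mul_ne_zero_of_ne_zero hD hadd hτFj hFj
    obtain ⟨u, -, hu⟩ := exists_supDegree_mem_support D hFj
    refine ⟨mul_ne_zero_of_ne_zero hD hadd hsingle hprod, u, ?_⟩
    rw [supDegree_mul_of_ne_zero hD hadd hsingle hprod, supDegree_mul_of_ne_zero hD hadd hτFj hFj,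
      supDegree_mapCoeff hτ, supDegree_single_ne_zero _ (hc j), hu, hadd, hadd]
  refine sum_ne_zero_of_injOn_supDegree (D := D) ⟨i, by simpa [s] using hFi⟩
    (fun j hj ↦ (hG j hj).1) (fun j hj j' hj' hjj' ↦ ?_) ?_
  · obtain ⟨u, hu⟩ := (hG j hj).2
    obtain ⟨v, hv⟩ := (hG j' hj').2
    exact hb j j' u v (hD (hu.symm.trans (hjj'.trans hv)))
  · rwa [Finset.sum_filter_of_ne (p := fun j ↦ F j ≠ 0) fun j _ hGj hFj ↦ hGj (by simp [hFj])]

end Degree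

section TensorLift

variable {k A M K : Type*} [CommRing k] [Ring A] [Algebra k A] [AddMonoid M] [CommRing K]
  [Algebra k K]

noncomputable def tensorLift (φ : AddMonoidAlgebra k M →ₐ[k] K) :
    AddMonoidAlgebra A M →ₐ[k] A ⊗[k] K :=
  liftNCAlgHom Algebra.TensorProduct.includeLeft
    ((Algebra.TensorProduct.includeRight.toMonoidHom.comp φ.toMonoidHom).comp (of k M))
    fun a m ↦ by simp [Commute, SemiconjBy, Algebra.TensorProduct.tmul_mul_tmul]

variable (φ : AddMonoidAlgebra k M →ₐ[k] K)

@[simp]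
lemma tensorLift_single (m : M) (a : A) : tensorLift φ (single m a) = a ⊗ₜ φ (single m 1) := by
  simp [tensorLift, liftNC_single, Algebra.TensorProduct.tmul_mul_tmul]

lemma tensorLift_comp_mapAlgHom :
    (tensorLift φ).comp (mapAlgHom M (Algebra.ofId k A)) =
      Algebra.TensorProduct.includeRight.comp φ :=
  algHom_ext (fun m ↦ by simp) (by ext)

lemma tmul_mem_range_tensorLift (a : A) (p : AddMonoidAlgebra k M) :
    a ⊗ₜ φ p ∈ (tensorLift φ).range := by
  have h : (1 : A) ⊗ₜ φ p ∈ (tensorLift φ).range :=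
    ⟨_, AlgHom.congr_fun (tensorLift_comp_mapAlgHom φ) p⟩
  simpa [Algebra.TensorProduct.tmul_mul_tmul] using
    mul_mem (⟨single 0 a, by simp [← one_def]⟩ : a ⊗ₜ[k] (1 : K) ∈ (tensorLift φ).range) h

lemma injective_tensorLift [Module.Flat k A] (hφ : Function.Injective φ) :
    Function.Injective (tensorLift (A := A) φ) := by
  classical
  let e : AddMonoidAlgebra A M ≃ₗ[k] A ⊗[k] AddMonoidAlgebra k M :=
    (coeffLinearEquiv k).trans ((finsuppScalarRight k k A M).symm.trans
      (LinearEquiv.lTensor A (coeffLinearEquiv k).symm))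
  have h : (tensorLift φ).toLinearMap = φ.toLinearMap.lTensor A ∘ₗ e.toLinearMap := by
    ext m a
    simp [e, finsuppScalarRight_symm_apply_single]
  have : ⇑(tensorLift (A := A) φ) = φ.toLinearMap.lTensor A ∘ e := congrArg DFunLike.coe h
  rw [this]
  exact (Module.Flat.lTensor_preserves_injective_linearMap _ hφ).comp e.injective

end TensorLift

end AddMonoidAlgebra

namespace Algebra.TensorProduct

variable {k A K : Type*} [CommRing k] [Ring A] [Algebra k A]

lemma commute_one_tmul [CommRing K] [Algebra k K] (z : A ⊗[k] K) (c : K) :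
    Commute z (1 ⊗ₜ c) := by
  induction z with
  | zero => exact Commute.zero_left _
  | tmul a c' => exact (Commute.one_right a).tmul (Commute.all c' c)
  | add z₁ z₂ h₁ h₂ => exact h₁.add_left h₂

lemma mul_one_tmul_mul [CommRing K] [Algebra k K] (y z : A ⊗[k] K) (c : K) :
    y * (1 ⊗ₜ c) * z = y * z * (1 ⊗ₜ c) := by
  rw [mul_assoc, ← (commute_one_tmul z c).eq, mul_assoc]

lemma eq_zero_of_mul_one_tmul_eq_zero [Field K] [Algebra k K] {z : A ⊗[k] K} {c : K} (hc : c ≠ 0)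
    (h : z * (1 ⊗ₜ c) = 0) : z = 0 :=
  calc z = z * (1 ⊗ₜ c) * (1 ⊗ₜ c⁻¹) := by
        rw [mul_assoc, tmul_mul_tmul, one_mul, mul_inv_cancel₀ hc, ← one_def, mul_one]
    _ = 0 := by rw [h, zero_mul]

variable [CommRing K] [Algebra k K]

lemma map_mul_one_tmul {τ : A →+ A} {σ : A ⊗[k] K →+ A ⊗[k] K}
    (hσ : ∀ a c, σ (a ⊗ₜ c) = τ a ⊗ₜ c) (z : A ⊗[k] K) (c : K) :
    σ (z * (1 ⊗ₜ c)) = σ z * (1 ⊗ₜ c) := by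
  induction z with
  | zero => simp
  | tmul a c' => simp [tmul_mul_tmul, hσ]
  | add z₁ z₂ h₁ h₂ => rw [add_mul, map_add, map_add, h₁, h₂, add_mul]

variable {R : Type*} [CommRing R] [Algebra R K] (S : Submonoid R) [IsLocalization S K]
  {T : Subalgebra k (A ⊗[k] K)}

lemma exists_mul_one_tmul_mem (hT : ∀ a r, a ⊗ₜ algebraMap R K r ∈ T) (z : A ⊗[k] K) :
    ∃ s ∈ S, z * (1 ⊗ₜ algebraMap R K s) ∈ T := by
  induction z with
  | zero => exact ⟨1, S.one_mem, by simp⟩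
  | tmul a c =>
    obtain ⟨⟨r, s⟩, hs⟩ := IsLocalization.surj S c
    exact ⟨s, s.2, by simpa [tmul_mul_tmul, hs] using hT a r⟩
  | add z₁ z₂ h₁ h₂ =>
    obtain ⟨s₁, hs₁, h₁⟩ := h₁
    obtain ⟨s₂, hs₂, h₂⟩ := h₂
    refine ⟨s₁ * s₂, S.mul_mem hs₁ hs₂, ?_⟩
    rw [map_mul, ← one_mul (1 : A), ← tmul_mul_tmul, add_mul, ← mul_assoc,
      (commute_one_tmul (1 ⊗ₜ[k] algebraMap R K s₁) _).eq, ← mul_assoc z₂]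
    exact T.add_mem (T.mul_mem h₁ (hT 1 s₂)) (T.mul_mem h₂ (hT 1 s₁))

lemma exists_forall_mul_one_tmul_mem (hT : ∀ a r, a ⊗ₜ algebraMap R K r ∈ T)
    {ι : Type*} [Fintype ι] (x : ι → A ⊗[k] K) :
    ∃ s ∈ S, ∀ i, x i * (1 ⊗ₜ algebraMap R K s) ∈ T := by
  classical
  choose s hs hxs using fun i ↦ exists_mul_one_tmul_mem S hT (x i)
  refine ⟨∏ i, s i, prod_mem fun i _ ↦ hs i, fun i ↦ ?_⟩
  rw [← Finset.mul_prod_erase _ _ (Finset.mem_univ i), map_mul,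
    ← one_mul (1 : A), ← tmul_mul_tmul, ← mul_assoc]
  exact T.mul_mem (hxs i) (hT 1 _)

end Algebra.TensorProduct

namespace AddMonoidAlgebra

open Algebra.TensorProduct

variable {k A M K : Type*} [CommRing k] [Ring A] [Algebra k A] [AddMonoid M] [CommRing K]
  [Algebra k K] {τ : A →+ A} {σ : A ⊗[k] K →+ A ⊗[k] K} (φ : AddMonoidAlgebra k M →ₐ[k] K)

lemma tensorLift_mapCoeff (hσ : ∀ a c, σ (a ⊗ₜ c) = τ a ⊗ₜ c) (f : AddMonoidAlgebra A M) :
    tensorLift φ (mapCoeff τ f) = σ (tensorLift φ f) := by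
  induction f using AddMonoidAlgebra.induction_linear with
  | zero => simp
  | add f₁ f₂ h₁ h₂ => rw [map_add, map_add, h₁, h₂, map_add, map_add]
  | single m a => simp [hσ]

lemma tensorLift_mul_mapCoeff_mul_self (hσ : ∀ a c, σ (a ⊗ₜ c) = τ a ⊗ₜ c)
    {f g : AddMonoidAlgebra A M} {y z : A ⊗[k] K} {r s : K} (hg : tensorLift φ g = y * (1 ⊗ₜ s))
    (hf : tensorLift φ f = z * (1 ⊗ₜ r)) :
    tensorLift φ (g * (mapCoeff τ f * f)) = y * σ z * z * (1 ⊗ₜ (r * r * s)) := by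
  rw [map_mul, map_mul, tensorLift_mapCoeff φ hσ, hg, hf, map_mul_one_tmul hσ, mul_one_tmul_mul,
    mul_one_tmul_mul (σ z)]
  simp only [mul_assoc, tmul_mul_tmul, one_mul]

end AddMonoidAlgebra

lemma Finset.prod_zpow_mul_prod_pow {ι G₀ : Type*} [Fintype ι] [CommGroupWithZero G₀]
    {y : ι → G₀} (hy : ∀ j, y j ≠ 0) {a : ι → ℤ} {N : ℕ} (ha : ∀ j, 0 ≤ a j + N) :
    (∏ j, y j ^ a j) * ∏ j, y j ^ N = ∏ j, y j ^ (a j + N).toNat := by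
  rw [← Finset.prod_mul_distrib]
  refine Finset.prod_congr rfl fun j _ ↦ ?_
  rw [← zpow_natCast, ← zpow_add₀ (hy j), ← zpow_natCast, Int.toNat_of_nonneg (ha j)]

lemma MvPolynomial.algebraMap_monomial_one {σ R K : Type*} [Fintype σ] [CommRing R] [CommRing K]
    [Algebra (MvPolynomial σ R) K] (b : σ →₀ ℕ) :
    algebraMap (MvPolynomial σ R) K (monomial b 1) =
      ∏ j, algebraMap (MvPolynomial σ R) K (X j) ^ b j := by
  rw [monomial_eq, map_one, one_mul, Finsupp.prod_fintype _ _ fun _ ↦ pow_zero _]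
  simp

open AddMonoidAlgebra in
lemma tensorLift_single_toNat_add {σ k D K : Type*} [Fintype σ] [Field k] [Ring D] [Algebra k D]
    [Field K] [Algebra (MvPolynomial σ k) K] [Algebra k K] [IsScalarTower k (MvPolynomial σ k) K]
    [IsFractionRing (MvPolynomial σ k) K] (c : k) {a : σ → ℤ} {N : ℕ} (ha : ∀ j, 0 ≤ a j + N) :
    tensorLift (A := D) (IsScalarTower.toAlgHom k (MvPolynomial σ k) K)
        (single (Finsupp.equivFunOnFinite.symm fun j ↦ (a j + N).toNat) (algebraMap k D c)) =
      (1 ⊗ₜ (algebraMap k K c * ∏ j, algebraMap (MvPolynomial σ k) K (.X j) ^ a j)) *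
        (1 ⊗ₜ ∏ j, algebraMap (MvPolynomial σ k) K (.X j) ^ N) := by
  have hX : ∀ j, algebraMap (MvPolynomial σ k) K (.X j) ≠ 0 := fun j ↦
    (map_ne_zero_iff _ (IsFractionRing.injective _ K)).2 (MvPolynomial.X_ne_zero j)
  have hmonomial : IsScalarTower.toAlgHom k (MvPolynomial σ k) K
      (single (Finsupp.equivFunOnFinite.symm fun j ↦ (a j + N).toNat) 1) =
        ∏ j, algebraMap (MvPolynomial σ k) K (.X j) ^ (a j + N).toNat :=
    MvPolynomial.algebraMap_monomial_one _
  rw [tensorLift_single, hmonomial, Algebra.TensorProduct.tmul_mul_tmul, one_mul, mul_assoc,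
    Finset.prod_zpow_mul_prod_pow hX ha, Algebra.algebraMap_eq_smul_one (A := D),
    TensorProduct.smul_tmul, ← Algebra.smul_def]

lemma eq_of_toNat_add_add_self_eq {ι κ : Type*} [Finite κ] {a : ι → κ → ℤ}
    (ha : Function.Injective fun i j ↦ (a i j : ZMod 2)) {N : ℕ} (hN : ∀ i j, 0 ≤ a i j + N)
    {i i' : ι} {u v : κ →₀ ℕ}
    (h : Finsupp.equivFunOnFinite.symm (fun j ↦ (a i j + N).toNat) + (u + u) =
      Finsupp.equivFunOnFinite.symm (fun j ↦ (a i' j + N).toNat) + (v + v)) : i = i' := by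
  refine ha (funext fun j ↦ ?_)
  have hj := congrArg (fun f ↦ ((f j : ℕ) : ℤ)) h
  simp only [Finsupp.add_apply, Finsupp.coe_equivFunOnFinite_symm, Nat.cast_add,
    Int.toNat_of_nonneg (hN _ _)] at hj
  have hj2 := congrArg (fun z : ℤ ↦ (z : ZMod 2)) hj
  push_cast [CharTwo.add_self_eq_zero] at hj2
  simpa using hj2

open AddMonoidAlgebra Algebra.TensorProduct in
theorem hermitian_form_anisotropic_general (k D : Type) [Field k] [DivisionRing D] [Algebra k D]
    (τ : D → D)
    (hτadd : ∀ x y : D, τ (x + y) = τ x + τ y)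
    (hτinvol : ∀ x : D, τ (τ x) = x)
    (n m : ℕ) (α : Fin m → kˣ) (a : Fin m → Fin n → ℤ)
    (ha : Function.Injective fun i : Fin m => fun j : Fin n => ((a i j : ZMod 2)))
    (σ : D ⊗[k] FractionRing (MvPolynomial (Fin n) k) →
      D ⊗[k] FractionRing (MvPolynomial (Fin n) k))
    (hσadd : ∀ x y, σ (x + y) = σ x + σ y)
    (hσ : ∀ (d : D) (c : FractionRing (MvPolynomial (Fin n) k)), σ (d ⊗ₜ[k] c) = τ d ⊗ₜ[k] c)
    (x : Fin m → D ⊗[k] FractionRing (MvPolynomial (Fin n) k))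
    (hx : ∑ i : Fin m,
        ((1 : D) ⊗ₜ[k]
          (algebraMap k (FractionRing (MvPolynomial (Fin n) k)) (α i) *
            ∏ j : Fin n,
              algebraMap (MvPolynomial (Fin n) k) (FractionRing (MvPolynomial (Fin n) k))
                (MvPolynomial.X j) ^ (a i j))) *
        σ (x i) * x i = 0) :
    ∀ i, x i = 0 := by
  set K := FractionRing (MvPolynomial (Fin n) k)
  let φ : AddMonoidAlgebra k (Fin n →₀ ℕ) →ₐ[k] K := IsScalarTower.toAlgHom k _ K
  let τ' : D →+ D := AddMonoidHom.mk' τ hτadd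
  let σ' : D ⊗[k] K →+ D ⊗[k] K := AddMonoidHom.mk' σ hσadd
  obtain ⟨Q, hQ, hxQ⟩ := exists_forall_mul_one_tmul_mem (nonZeroDivisors (MvPolynomial (Fin n) k))
    (tmul_mem_range_tensorLift φ) x
  choose F hF using fun i ↦ (AlgHom.mem_range _).1 (hxQ i)
  obtain ⟨N, hN⟩ : ∃ N : ℕ, ∀ i j, 0 ≤ a i j + N := by
    obtain ⟨N, hN⟩ := Finite.exists_le fun p : Fin m × Fin n ↦ (-a p.1 p.2).toNat
    exact ⟨N, fun i j ↦ by have := hN (i, j); dsimp only at this; omega⟩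
  set b : Fin m → Fin n →₀ ℕ := fun i ↦ Finsupp.equivFunOnFinite.symm fun j ↦ (a i j + N).toNat
  have hsum : ∑ i, single (b i) (algebraMap k D (α i)) * (mapCoeff τ' (F i) * F i) = 0 := by
    refine injective_tensorLift φ (IsFractionRing.injective _ K) ?_
    rw [map_sum, map_zero, Finset.sum_congr rfl fun i _ ↦ tensorLift_mul_mapCoeff_mul_self
      (τ := τ') (σ := σ') φ hσ (tensorLift_single_toNat_add (D := D) (K := K) (α i : k) (hN i))
      (hF i), ← Finset.sum_mul]
    exact (congrArg (· * _) hx).trans (zero_mul _)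
  intro i
  have hFi : F i = 0 := eq_zero_of_sum_single_mul_mapCoeff_mul_self_eq_zero (D := toLex)
    toLex.injective (fun _ _ ↦ rfl) (τ := τ') (Function.LeftInverse.injective hτinvol)
    (fun i ↦ (map_ne_zero _).2 (α i).ne_zero) (fun _ _ _ _ h ↦ eq_of_toNat_add_add_self_eq ha hN h)
    hsum i
  refine eq_zero_of_mul_one_tmul_eq_zero ?_ (by rw [← hF, hFi, map_zero])
  exact (map_ne_zero_iff _ (IsFractionRing.injective _ K)).2 (nonZeroDivisors.ne_zero hQ)

/-- Let `D` be a division ring, `k` a field contained in the center of `D`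
(i.e. `D` is a `k`-algebra), and `τ` a `k`-linear ring anti-automorphism of `D` with
`τ ∘ τ = id`. Let `K = k(t₁, …, tₙ)` be the field of fractions of the polynomial ring
in `n` variables over `k`, and let `σ = τ ⊗ id_K` be the unique additive map on
`D ⊗[k] K` with `σ (d ⊗ c) = τ d ⊗ c`. Fix units `α₁, …, α_m ∈ kˣ` and integer vectors
`a₁, …, a_m ∈ ℤⁿ` whose images in `(ℤ/2ℤ)ⁿ` are pairwise distinct. Then the hermitian
form `h(x, y) = ∑ i, αᵢ t₁^{a i 1} ⋯ tₙ^{a i n} σ(xᵢ) yᵢ` is anisotropic on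
`(D ⊗[k] K)^m`: if `∑ i, αᵢ t₁^{a i 1} ⋯ tₙ^{a i n} σ(xᵢ) xᵢ = 0` then every `xᵢ = 0`.
Here `tⱼ` is the image in `K` of the polynomial variable `Xⱼ`, and the scalar
`αᵢ t₁^{a i 1} ⋯ tₙ^{a i n} ∈ Kˣ` acts through the inclusion `K → D ⊗[k] K`,
`c ↦ 1 ⊗ c`. -/
theorem hermitian_form_anisotropic (k D : Type) [Field k] [DivisionRing D] [Algebra k D]
    (τ : D → D)
    (hτadd : ∀ x y : D, τ (x + y) = τ x + τ y)
    (hτmul : ∀ x y : D, τ (x * y) = τ y * τ x)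
    (hτone : τ 1 = 1)
    (hτlin : ∀ (c : k) (x : D), τ (c • x) = c • τ x)
    (hτinvol : ∀ x : D, τ (τ x) = x)
    (n m : ℕ) (α : Fin m → kˣ) (a : Fin m → Fin n → ℤ)
    (ha : Function.Injective fun i : Fin m => fun j : Fin n => ((a i j : ZMod 2)))
    (σ : D ⊗[k] FractionRing (MvPolynomial (Fin n) k) →
      D ⊗[k] FractionRing (MvPolynomial (Fin n) k))
    (hσadd : ∀ x y, σ (x + y) = σ x + σ y)
    (hσ : ∀ (d : D) (c : FractionRing (MvPolynomial (Fin n) k)), σ (d ⊗ₜ[k] c) = τ d ⊗ₜ[k] c)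
    (x : Fin m → D ⊗[k] FractionRing (MvPolynomial (Fin n) k))
    (hx : ∑ i : Fin m,
        ((1 : D) ⊗ₜ[k]
          (algebraMap k (FractionRing (MvPolynomial (Fin n) k)) (α i) *
            ∏ j : Fin n,
              algebraMap (MvPolynomial (Fin n) k) (FractionRing (MvPolynomial (Fin n) k))
                (MvPolynomial.X j) ^ (a i j))) *
        σ (x i) * x i = 0) :
    ∀ i, x i = 0 :=
  hermitian_form_anisotropic_general k D τ hτadd hτinvol n m α a ha σ hσadd hσ x hx
end

section
/- Let D be a division ring, k a field contained in the center of D, and τ a k-linear ring anti-automorphism of D with τ ∘ τ = id. Let R = AddMonoidAlgebra D (Fin n →₀ ℤ) be the ring of Laurent polynomials in n central variables t₁,…,tₙ with coefficients in D, and let σ : R → R be the additive bijection applying τ to each coefficient (σ(Σ_e c_e t^e) = Σ_e τ(c_e) t^e). Fix units α₁,…,α_m ∈ kˣ and exponent vectors a₁,…,a_m ∈ ℤⁿ whose images in (ℤ/2ℤ)ⁿ are pairwise distinct. Then for every m-tuple (x₁,…,x_m) of elements of R which are not all zero, the element Σ_{i=1}^m αᵢ t^{aᵢ} σ(xᵢ)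 xᵢ of R is nonzero, where t^{aᵢ} denotes the monomial with coefficient 1 and exponent vector aᵢ. -/
/-!
Order the exponents lexicographically. If `cᵢ t^{bᵢ}` is the leading term of `xᵢ ≠ 0`, the term
`αᵢ t^{aᵢ} σ(xᵢ) xᵢ` has leading exponent `aᵢ + 2bᵢ` with leading coefficient `αᵢ τ(cᵢ) cᵢ ≠ 0`,
since `σ` preserves supports and `D` has no zero divisors. The exponents `aᵢ + 2bᵢ` are
congruent to `aᵢ` mod 2, hence pairwise distinct, so the largest of them survives in the sum.
-/

namespace AddMonoidAlgebra

variable {R A B : Type*} [Semiring R] {deg : A → B}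

theorem le_of_mem_support_single [Preorder B] {a₀ : A} {c : R} :
    ∀ a ∈ (single a₀ c).coeff.support, deg a ≤ deg a₀ := fun a ha => by
  rw [Finset.mem_singleton.1 (Finsupp.support_single_subset ha)]

theorem exists_mem_support_forall_le [LinearOrder B] {p : R[A]} (hp : p ≠ 0) :
    ∃ b ∈ p.coeff.support, ∀ a ∈ p.coeff.support, deg a ≤ deg b :=
  p.coeff.support.exists_max_image deg (Finsupp.support_nonempty_iff.2 (coeff_eq_zero.not.2 hp))

theorem sum_ne_zero_of_forall_le [LinearOrder B] (hdeg : deg.Injective) {ι : Type*}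
    {s : Finset ι} {f : ι → R[A]} {e : ι → A} (hs : s.Nonempty) (he : Set.InjOn e s)
    (hle : ∀ i ∈ s, ∀ a ∈ (f i).coeff.support, deg a ≤ deg (e i))
    (hne : ∀ i ∈ s, (f i).coeff (e i) ≠ 0) :
    ∑ i ∈ s, f i ≠ 0 := by
  obtain ⟨i₀, hi₀, hmax⟩ := s.exists_max_image (deg ∘ e) hs
  have hcoeff : (∑ i ∈ s, f i).coeff (e i₀) = (f i₀).coeff (e i₀) := by
    rw [coeff_sum, Finsupp.finsetSum_apply]
    refine Finset.sum_eq_single_of_mem i₀ hi₀ fun j hj hji => ?_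
    by_contra hj₀
    have hle_j := hle j hj _ (Finsupp.mem_support_iff.2 hj₀)
    exact hji (he hj hi₀ (hdeg ((hmax j hj).antisymm hle_j)))
  intro hsum
  exact hne i₀ hi₀ (by rw [← hcoeff, hsum, coeff_zero, Finsupp.zero_apply])

variable [AddMonoid A] [AddCommMonoid B] [LinearOrder B] [IsOrderedCancelAddMonoid B]
  {p q : R[A]} {ap aq : A}

theorem le_of_mem_support_mul (hadd : ∀ a₁ a₂, deg (a₁ + a₂) = deg a₁ + deg a₂)
    (hp : ∀ a ∈ p.coeff.support, deg a ≤ deg ap) (hq : ∀ a ∈ q.coeff.support, deg a ≤ deg aq) :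
    ∀ a ∈ (p * q).coeff.support, deg a ≤ deg (ap + aq) := by
  classical
  intro a ha
  obtain ⟨u, hu, v, hv, rfl⟩ := Finset.mem_add.1 (support_coeff_mul_subset p q ha)
  rw [hadd, hadd]
  exact add_le_add (hp u hu) (hq v hv)

theorem coeff_mul_add_of_forall_le (hdeg : deg.Injective)
    (hadd : ∀ a₁ a₂, deg (a₁ + a₂) = deg a₁ + deg a₂)
    (hp : ∀ a ∈ p.coeff.support, deg a ≤ deg ap) (hq : ∀ a ∈ q.coeff.support, deg a ≤ deg aq) :
    (p * q).coeff (ap + aq) = p.coeff ap * q.coeff aq :=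
  coeff_mul_add_of_uniqueAdd fun a b ha hb hab => by
    have := (add_eq_add_iff_eq_and_eq (hp a ha) (hq b hb)).1 (by rw [← hadd, ← hadd, hab])
    exact ⟨hdeg this.1, hdeg this.2⟩

theorem le_of_mem_support_single_mul_mul (hadd : ∀ a₁ a₂, deg (a₁ + a₂) = deg a₁ + deg a₂)
    (a₀ : A) (c : R) {b : A} (hp : ∀ a ∈ p.coeff.support, deg a ≤ deg b)
    (hq : ∀ a ∈ q.coeff.support, deg a ≤ deg b) :
    ∀ a ∈ (single a₀ c * p * q).coeff.support, deg a ≤ deg (a₀ + b + b) :=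
  le_of_mem_support_mul hadd (le_of_mem_support_mul hadd le_of_mem_support_single hp) hq

theorem coeff_single_mul_mul_of_forall_le (hdeg : deg.Injective)
    (hadd : ∀ a₁ a₂, deg (a₁ + a₂) = deg a₁ + deg a₂)
    (a₀ : A) (c : R) {b : A} (hp : ∀ a ∈ p.coeff.support, deg a ≤ deg b)
    (hq : ∀ a ∈ q.coeff.support, deg a ≤ deg b) :
    (single a₀ c * p * q).coeff (a₀ + b + b) = c * p.coeff b * q.coeff b := by
  rw [coeff_mul_add_of_forall_le hdeg hadd
      (le_of_mem_support_mul hadd le_of_mem_support_single hp) hq,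
    coeff_mul_add_of_forall_le hdeg hadd le_of_mem_support_single hp, coeff_single,
    Finsupp.single_eq_same]

end AddMonoidAlgebra

theorem Finsupp.injective_add_add_self_of_injective_intCast_zmod_two {ι κ : Type*}
    {a : ι → κ →₀ ℤ} (ha : Function.Injective fun i j => (a i j : ZMod 2)) (b : ι → κ →₀ ℤ) :
    Function.Injective fun i => a i + b i + b i := by
  intro i i' h
  refine ha (funext fun j => ?_)
  have hj := congrArg (fun v : κ →₀ ℤ => ((v j : ℤ) : ZMod 2)) h
  simpa [add_assoc, CharTwo.add_self_eq_zero] using hj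

theorem laurent_sum_ne_zero_general (k D : Type) [Field k] [DivisionRing D] [Algebra k D]
    (τ : D → D)
    (hτadd : ∀ x y : D, τ (x + y) = τ x + τ y)
    (hτinvol : ∀ x : D, τ (τ x) = x)
    (n m : ℕ) (α : Fin m → kˣ) (a : Fin m → (Fin n →₀ ℤ))
    (ha : Function.Injective fun i : Fin m => fun j : Fin n => ((a i j : ZMod 2)))
    (σ : AddMonoidAlgebra D (Fin n →₀ ℤ) → AddMonoidAlgebra D (Fin n →₀ ℤ))
    (hσ : ∀ (x : AddMonoidAlgebra D (Fin n →₀ ℤ)) (e : Fin n →₀ ℤ), (σ x).coeff e = τ (x.coeff e))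
    (x : Fin m → AddMonoidAlgebra D (Fin n →₀ ℤ))
    (hx : ∃ i, x i ≠ 0) :
    ∑ i : Fin m,
      AddMonoidAlgebra.single (a i) (algebraMap k D (α i)) * σ (x i) * x i ≠ 0 := by
  classical
  have hτzero : τ 0 = 0 := (AddMonoidHom.mk' τ hτadd).map_zero
  have hσsupp (y : AddMonoidAlgebra D (Fin n →₀ ℤ)) : (σ y).coeff.support ⊆ y.coeff.support :=
    fun e he => Finsupp.mem_support_iff.2 fun hy =>
      Finsupp.mem_support_iff.1 he (by rw [hσ, hy, hτzero])
  set s := Finset.univ.filter fun i => x i ≠ 0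
  choose! b hb_mem hb_le using fun i (hi : i ∈ s) =>
    AddMonoidAlgebra.exists_mem_support_forall_le (deg := toLex) (Finset.mem_filter.1 hi).2
  have hσb_le (i) (hi : i ∈ s) : ∀ e ∈ (σ (x i)).coeff.support, toLex e ≤ toLex (b i) :=
    fun e he => hb_le i hi e (hσsupp _ he)
  rw [← Finset.sum_filter_of_ne (p := fun i => x i ≠ 0)
    fun i _ hi hxi => hi (by rw [hxi, mul_zero])]
  obtain ⟨i, hi⟩ := hx
  refine AddMonoidAlgebra.sum_ne_zero_of_forall_le toLex.injective ⟨i, by simpa [s] using hi⟩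
    (Finsupp.injective_add_add_self_of_injective_intCast_zmod_two ha b).injOn
    (fun i hi => AddMonoidAlgebra.le_of_mem_support_single_mul_mul (fun _ _ => rfl) _ _
      (hσb_le i hi) (hb_le i hi))
    (fun i hi => ?_)
  rw [AddMonoidAlgebra.coeff_single_mul_mul_of_forall_le toLex.injective (fun _ _ => rfl) _ _
      (hσb_le i hi) (hb_le i hi), hσ]
  have hc := Finsupp.mem_support_iff.1 (hb_mem i hi)
  exact mul_ne_zero (mul_ne_zero ((map_ne_zero _).2 (α i).ne_zero)
    ((Function.LeftInverse.injective hτinvol).ne_iff' hτzero |>.2 hc)) hc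

/-- Let `D` be a division ring, `k` a field contained in the center of `D`
(i.e. `D` is a `k`-algebra), and `τ` a `k`-linear ring anti-automorphism of `D` with
`τ ∘ τ = id`. Let `R = AddMonoidAlgebra D (Fin n →₀ ℤ)` be the ring of Laurent
polynomials in `n` central variables with coefficients in `D`, and let `σ : R → R` be
the additive bijection applying `τ` to each coefficient. Fix units `α₁, …, α_m ∈ kˣ`
and exponent vectors `a₁, …, a_m ∈ ℤⁿ` whose images in `(ℤ/2ℤ)ⁿ` are pairwise distinct.
Then for every `m`-tuple `(x₁, …, x_m)` of elements of `R` which are not all zero, the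
element `∑ i, αᵢ t^{aᵢ} σ(xᵢ) xᵢ` of `R` is nonzero, where `αᵢ t^{aᵢ}` is the monomial
with coefficient `algebraMap k D αᵢ` and exponent vector `aᵢ`. -/
theorem laurent_sum_ne_zero (k D : Type) [Field k] [DivisionRing D] [Algebra k D]
    (τ : D → D)
    (hτadd : ∀ x y : D, τ (x + y) = τ x + τ y)
    (hτmul : ∀ x y : D, τ (x * y) = τ y * τ x)
    (hτone : τ 1 = 1)
    (hτlin : ∀ (c : k) (x : D), τ (c • x) = c • τ x)
    (hτinvol : ∀ x : D, τ (τ x) = x)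
    (n m : ℕ) (α : Fin m → kˣ) (a : Fin m → (Fin n →₀ ℤ))
    (ha : Function.Injective fun i : Fin m => fun j : Fin n => ((a i j : ZMod 2)))
    (σ : AddMonoidAlgebra D (Fin n →₀ ℤ) → AddMonoidAlgebra D (Fin n →₀ ℤ))
    (hσ : ∀ (x : AddMonoidAlgebra D (Fin n →₀ ℤ)) (e : Fin n →₀ ℤ), (σ x).coeff e = τ (x.coeff e))
    (x : Fin m → AddMonoidAlgebra D (Fin n →₀ ℤ))
    (hx : ∃ i, x i ≠ 0) :
    ∑ i : Fin m,
      AddMonoidAlgebra.single (a i) (algebraMap k D (α i)) * σ (x i) * x i ≠ 0 :=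
  laurent_sum_ne_zero_general k D τ hτadd hτinvol n m α a ha σ hσ x hx
end

section
/- Let k be a field and D a division ring which is a k-algebra (with k mapping into the center of D) and which is finite-dimensional as a k-vector space. Then the ring k((t)) ⊗_k D is a division ring, where k((t)) denotes the field of formal Laurent series over k. -/
/-!
Sending `f ⊗ d` to the series `∑ fₙ d tⁿ` is a `k`-algebra map `k((t)) ⊗[k] D → D((t))`. It is
injective: writing an element as `∑ fᵢ ⊗ bᵢ` over a `k`-basis `(bᵢ)` of `D`, the `n`-th coefficient
of its image is `∑ (fᵢ)ₙ bᵢ`. Since `D((t))` has no zero divisors, `k((t)) ⊗[k] D` is a domain, and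
a domain that is finite-dimensional over the field `k((t))` is a division ring.
-/

open TensorProduct

/- Deactivated so that the `k`-module structure on `LaurentSeries k` used to form
`k((t)) ⊗[k] D` is the one coming from its `k`-algebra structure. -/
attribute [-instance] HahnSeries.instModule

namespace LaurentSeries

open HahnSeries

section Semiring

variable {R A : Type*} [CommSemiring R] [Semiring A] [Algebra R A]

/-- Instance search does not find this for `B = LaurentSeries R`: the action it reaches there is
the coefficientwise `HahnSeries.instSMul`, not `Algebra.toSMul`. -/
instance isScalarTower_algebra (B : Type*) [Semiring B] [Algebra R B] :
    @IsScalarTower R R B Algebra.toSMul Algebra.toSMul Algebra.toSMul :=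
  IsScalarTower.of_algebraMap_smul fun _ _ ↦ rfl

noncomputable def mapAlg : LaurentSeries R →ₐ[R] LaurentSeries A where
  toFun x := x.map (algebraMap R A)
  map_one' := HahnSeries.map_one (algebraMap R A).toMonoidWithZeroHom
  map_mul' _ _ := HahnSeries.map_mul (algebraMap R A : R →ₙ+* A)
  map_zero' := by ext; simp
  map_add' _ _ := HahnSeries.map_add (algebraMap R A : R →+ A)
  commutes' r := by
    ext n
    by_cases hn : n = 0 <;> simp [algebraMap_apply', HahnSeries.algebraMap_apply, hn]

@[simp]
lemma mapAlg_coeff (x : LaurentSeries R) (n : ℤ) :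
    (mapAlg x : LaurentSeries A).coeff n = algebraMap R A (x.coeff n) :=
  rfl

noncomputable def CAlgHom : A →ₐ[R] LaurentSeries A where
  toRingHom := C
  commutes' _ := rfl

noncomputable def ofTensor : LaurentSeries R ⊗[R] A →ₐ[R] LaurentSeries A :=
  Algebra.TensorProduct.lift mapAlg CAlgHom fun x a ↦ by
    ext n
    simp [CAlgHom, C_apply, Algebra.commutes]

@[simp]
lemma ofTensor_tmul_coeff (x : LaurentSeries R) (a : A) (n : ℤ) :
    (ofTensor (x ⊗ₜ a)).coeff n = x.coeff n • a := by
  simp [ofTensor, CAlgHom, C_apply, Algebra.smul_def]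

end Semiring

theorem ofTensor_injective {R A : Type*} [CommRing R] [Ring A] [Algebra R A] [Module.Free R A] :
    Function.Injective (ofTensor : LaurentSeries R ⊗[R] A →ₐ[R] LaurentSeries A) := by
  classical
  let b := Module.Free.chooseBasis R A
  rw [injective_iff_map_eq_zero]
  intro x hx
  obtain ⟨c, rfl⟩ : ∃ c : _ →₀ LaurentSeries R, x = c.sum fun i f ↦ f ⊗ₜ b i :=
    ⟨equivFinsuppOfBasisRight b x, by
      rw [← equivFinsuppOfBasisRight_symm_apply, LinearEquiv.symm_apply_apply]⟩
  suffices hc : c = 0 by simp [hc]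
  ext i n
  have hcoeff : Finsupp.linearCombination R b (c.mapRange (coeff · n) (by simp)) = 0 := by
    have hx_coeff := congrArg (coeff.addMonoidHom n) hx
    rw [map_finsuppSum, map_finsuppSum, map_zero] at hx_coeff
    rw [Finsupp.linearCombination_apply, Finsupp.sum_mapRange_index (by simp)]
    simpa using hx_coeff
  simpa using congr($(linearIndependent_iff.mp b.linearIndependent _ hcoeff) i)

end LaurentSeries

/-- Let `k` be a field and `D` a division ring which is a `k`-algebra
(so `k` maps into the center of `D`) and which is finite-dimensional as a `k`-vector
space. Then the ring `k((t)) ⊗[k] D` is a division ring: it is nontrivial and every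
nonzero element is a unit. Here `k((t))` is the field of formal Laurent series over `k`. -/
theorem laurentSeries_tensor_divisionRing (k D : Type) [Field k] [DivisionRing D]
    [Algebra k D] [FiniteDimensional k D] :
    Nontrivial (LaurentSeries k ⊗[k] D) ∧
      ∀ x : LaurentSeries k ⊗[k] D, x ≠ 0 → IsUnit x := by
  have hdomain : IsDomain (LaurentSeries k ⊗[k] D) :=
    LaurentSeries.ofTensor_injective.isDomain LaurentSeries.ofTensor
  exact ⟨hdomain.toNontrivial, fun _ hx ↦ FiniteDimensional.isUnit (LaurentSeries k) hx⟩
end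

section
/- Let s, q be natural numbers, d₁,…,d_s positive integers, and (b_{i,j})_{1≤i≤s, 1≤j≤q} integers. For each i, let rᵢ ∈ ℤ^{s+q} be the vector whose i-th coordinate is dᵢ, whose other coordinates among the first s are 0, and whose last q coordinates are (b_{i,1},…,b_{i,q}). Then the following are equivalent: (1) the subgroup of ℤ^{s+q} spanned by r₁,…,r_s is a saturated sublattice (i.e., whenever m·v lies in the span for some nonzero integer m and v ∈ ℤ^{s+q}, then v lies in the span); (2) for every field K, the map (Kˣ)^s × (Kˣ)^q → (Kˣ)^s sending (y₁,…,y_s,x₁,…,x_q) to (y₁^{d₁} x₁^{b_{1,1}}⋯x_q^{b_{1,q}}, …, y_s^{d_s} x₁^{b_{s,1}}⋯x_q^{b_{s,q}}) is surjective. -/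
/-!
Both conditions are equivalent to the existence of a linear map `P : ℤ^s × ℤ^q → ℤ^s` with
`P rᵢ = eᵢ`.

A saturated span has a finitely generated torsion-free, hence free, quotient, so it is a direct
summand; as `dᵢ ≠ 0` the `rᵢ` are linearly independent, and their coordinates in the summand give
`P`. Conversely `P` makes the span saturated, because `ℤ^s × ℤ^q` is torsion-free.

Characters of `ℤ^s × ℤ^q` with values in `Kˣ` are the tuples in `(Kˣ)^s × (Kˣ)^q`, and the monomial
map is restriction of characters to the `rᵢ`, which `P` makes surjective. Conversely, composing
characters with values in `ℚˣ` with the `2`-adic valuation, every family of integer values on the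
`rᵢ` is attained by a linear form; the forms attaining `δᵢₖ` make up `P`.
-/

open Function Set Submodule

namespace Submodule

variable {R M : Type*} [CommRing R] [AddCommGroup M] [Module R M]

def IsSaturated (L : Submodule R M) : Prop :=
  ∀ (a : R) (v : M), a ≠ 0 → a • v ∈ L → v ∈ L

theorem IsSaturated.isTorsionFree_quotient [IsDomain R] {L : Submodule R M}
    (hL : L.IsSaturated) : Module.IsTorsionFree R (M ⧸ L) := by
  refine .of_smul_eq_zero fun a x hax => or_iff_not_imp_left.2 fun ha => ?_
  obtain ⟨v, rfl⟩ := L.mkQ_surjective x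
  rw [← map_smul, mkQ_apply, Quotient.mk_eq_zero] at hax
  rw [mkQ_apply, Quotient.mk_eq_zero]
  exact hL a v ha hax

theorem IsSaturated.exists_retraction [IsDomain R] [IsPrincipalIdealRing R] [Module.Finite R M]
    {L : Submodule R M} (hL : L.IsSaturated) : ∃ ρ : M →ₗ[R] L, ρ ∘ₗ L.subtype = .id := by
  have := hL.isTorsionFree_quotient
  exact ((Function.Exact.split_tfae (LinearMap.exact_subtype_mkQ L) L.injective_subtype
    L.mkQ_surjective).out 0 1).1 (Module.projective_lifting_property L.mkQ .id L.mkQ_surjective)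

end Submodule

section Coordinates

variable {R M ι : Type*} [CommRing R] [AddCommGroup M] [Module R M] {r : ι → M}

theorem surjective_comp_of_surjective_linearMap {A B : Type*} [AddCommGroup A] [Module R A]
    [AddCommGroup B] [Module R B] (h : Surjective fun χ : M →ₗ[R] A => χ ∘ r)
    {φ : A →ₗ[R] B} (hφ : Surjective φ) : Surjective fun χ : M →ₗ[R] B => χ ∘ r := by
  intro f
  choose g hg using fun i => hφ (f i)
  obtain ⟨χ, hχ⟩ := h g
  exact ⟨φ ∘ₗ χ, funext fun i => by simp [← hg, ← hχ]⟩

variable [DecidableEq ι]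

theorem exists_coordinates_of_surjective_comp (h : Surjective fun χ : M →ₗ[R] R => χ ∘ r) :
    ∃ P : M →ₗ[R] ι → R, ∀ i, P (r i) = Pi.single i 1 := by
  choose χ hχ using fun k => h (Pi.single k 1)
  refine ⟨LinearMap.pi χ, fun i => funext fun k => ?_⟩
  exact (congrFun (hχ k) i).trans (Pi.single_comm k 1 i)

variable [Fintype ι]

theorem surjective_comp_of_coordinates {A : Type*} [AddCommGroup A] [Module R A]
    {P : M →ₗ[R] ι → R} (hP : ∀ i, P (r i) = Pi.single i 1) :
    Surjective fun χ : M →ₗ[R] A => χ ∘ r := fun f =>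
  ⟨Fintype.linearCombination R f ∘ₗ P, funext fun i => by simp [hP]⟩

theorem isSaturated_span_of_coordinates [IsDomain R] [Module.IsTorsionFree R M]
    {P : M →ₗ[R] ι → R} (hP : ∀ i, P (r i) = Pi.single i 1) :
    (span R (range r)).IsSaturated := by
  have hPr : ∀ c, P (Fintype.linearCombination R r c) = c := fun c => by
    simp [Fintype.linearCombination_apply, hP, ← pi_eq_sum_univ']
  intro a v ha hav
  rw [← Fintype.range_linearCombination] at hav ⊢
  obtain ⟨c, hc⟩ := hav
  refine ⟨P v, smul_right_injective M ha ?_⟩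
  dsimp only
  rw [← map_smul, ← map_smul, ← hc, hPr]

theorem LinearIndependent.exists_coordinates_of_isSaturated [IsDomain R] [IsPrincipalIdealRing R]
    [Module.Finite R M] (hr : LinearIndependent R r) (hsat : (span R (range r)).IsSaturated) :
    ∃ P : M →ₗ[R] ι → R, ∀ i, P (r i) = Pi.single i 1 := by
  obtain ⟨ρ, hρ⟩ := hsat.exists_retraction
  refine ⟨(Module.Basis.span hr).equivFun ∘ₗ ρ, fun i => ?_⟩
  have hρr : ρ (r i) = Module.Basis.span hr i := by
    simpa [Module.Basis.span_apply] using LinearMap.congr_fun hρ (Module.Basis.span hr i)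
  simp [hρr, Finsupp.single_eq_pi_single]

end Coordinates

theorem linearIndependent_single_prod {R ι N : Type*} [CommRing R] [IsDomain R] [DecidableEq ι]
    [AddCommGroup N] [Module R N] {d : ι → R} (hd : ∀ i, d i ≠ 0) (b : ι → N) :
    LinearIndependent R fun i => ((Pi.single i (d i) : ι → R), b i) :=
  LinearIndependent.of_comp (LinearMap.fst R _ _) (Pi.linearIndependent_single_of_ne_zero hd)

section Monomial

variable {G σ τ ι : Type*} [CommGroup G] [Fintype σ] [Fintype τ] [DecidableEq σ] [DecidableEq τ]

theorem Fintype.prod_zpow_single (y : σ → G) (i : σ) (n : ℤ) :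
    ∏ k, y k ^ (Pi.single i n : σ → ℤ) k = y i ^ n := by
  simp [Pi.single_apply, apply_ite]

theorem surjective_monomial_iff_surjective_comp (r : ι → (σ → ℤ) × (τ → ℤ)) :
    Surjective (fun p : (σ → G) × (τ → G) =>
      fun i => (∏ k, p.1 k ^ (r i).1 k) * ∏ j, p.2 j ^ (r i).2 j) ↔
    Surjective fun χ : (σ → ℤ) × (τ → ℤ) →ₗ[ℤ] Additive G => χ ∘ r := by
  let e : (σ → G) × (τ → G) → ((σ → ℤ) × (τ → ℤ) →ₗ[ℤ] Additive G) := fun p =>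
    (Fintype.linearCombination ℤ (Additive.ofMul ∘ p.1)).coprod
      (Fintype.linearCombination ℤ (Additive.ofMul ∘ p.2))
  have he : Surjective e := fun χ =>
    ⟨(fun k => (χ (Pi.single k 1, 0)).toMul, fun j => (χ (0, Pi.single j 1)).toMul), by
      ext <;> simp [e]⟩
  have her : ∀ p i, (e p (r i)).toMul = (∏ k, p.1 k ^ (r i).1 k) * ∏ j, p.2 j ^ (r i).2 j := by
    intro p i
    simp [e, Fintype.linearCombination_apply]
  constructor
  · intro h f
    obtain ⟨p, hp⟩ := h (Additive.toMul ∘ f)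
    exact ⟨e p, funext fun i => Additive.toMul.injective <| (her p i).trans (congrFun hp i)⟩
  · intro h z
    obtain ⟨χ, hχ⟩ := h (Additive.ofMul ∘ z)
    obtain ⟨p, rfl⟩ := he χ
    exact ⟨p, funext fun i => (her p i).symm.trans (congrArg Additive.toMul (congrFun hχ i))⟩

end Monomial

noncomputable def padicValUnits (p : ℕ) [Fact p.Prime] : Additive ℚˣ →ₗ[ℤ] ℤ :=
  (AddMonoidHom.mk' (fun u => padicValRat p (u.toMul : ℚ)) fun u v =>
    padicValRat.mul u.toMul.ne_zero v.toMul.ne_zero).toIntLinearMap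

theorem padicValUnits_surjective (p : ℕ) [hp : Fact p.Prime] : Surjective (padicValUnits p) :=
  fun n => ⟨n • Additive.ofMul (Units.mk0 (p : ℚ) (by exact_mod_cast hp.out.ne_zero)), by
    simp [padicValUnits, padicValRat.self hp.out.one_lt]⟩

/-- Let `s, q` be natural numbers, `d₁, …, d_s` positive integers and
`(b i j)` an `s × q` integer matrix. For each `i`, let `rᵢ ∈ ℤ^(s+q)` be the vector
whose `i`-th coordinate among the first `s` is `dᵢ`, whose other coordinates among the
first `s` are `0`, and whose last `q` coordinates are `(b i 1, …, b i q)`. Then the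
following are equivalent:
(1) the subgroup of `ℤ^(s+q)` spanned by `r₁, …, r_s` is saturated: whenever `m • v`
lies in the span for some nonzero integer `m`, then `v` lies in the span;
(2) for every field `K`, the map `(Kˣ)^s × (Kˣ)^q → (Kˣ)^s` sending `(y, x)` to
`(y₁^{d₁} x₁^{b₁₁} ⋯ x_q^{b₁q}, …, y_s^{d_s} x₁^{b_s1} ⋯ x_q^{b_sq})` is surjective. -/
theorem saturated_iff_monomial_map_surjective (s q : ℕ) (d : Fin s → ℤ) (hd : ∀ i, 0 < d i)
    (b : Fin s → Fin q → ℤ) :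
    (∀ (m : ℤ) (v : (Fin s → ℤ) × (Fin q → ℤ)), m ≠ 0 →
        m • v ∈ Submodule.span ℤ
          (Set.range fun i : Fin s => ((Pi.single i (d i) : Fin s → ℤ), b i)) →
        v ∈ Submodule.span ℤ
          (Set.range fun i : Fin s => ((Pi.single i (d i) : Fin s → ℤ), b i))) ↔
      ∀ (K : Type) [Field K],
        Function.Surjective (fun p : (Fin s → Kˣ) × (Fin q → Kˣ) =>
          fun i : Fin s => p.1 i ^ d i * ∏ j : Fin q, p.2 j ^ b i j) := by
  set r : Fin s → (Fin s → ℤ) × (Fin q → ℤ) := fun i => ((Pi.single i (d i) : Fin s → ℤ), b i)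
  have hr : LinearIndependent ℤ r := linearIndependent_single_prod (fun i => (hd i).ne') b
  have hmonomial (K : Type) [Field K] :
      Surjective (fun p : (Fin s → Kˣ) × (Fin q → Kˣ) => fun i => p.1 i ^ d i * ∏ j, p.2 j ^ b i j)
        ↔ Surjective fun χ : (Fin s → ℤ) × (Fin q → ℤ) →ₗ[ℤ] Additive Kˣ => χ ∘ r := by
    simpa only [r, Fintype.prod_zpow_single] using
      surjective_monomial_iff_surjective_comp (G := Kˣ) r
  constructor
  · intro hsat K _
    obtain ⟨P, hP⟩ := hr.exists_coordinates_of_isSaturated hsat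
    exact (hmonomial K).2 (surjective_comp_of_coordinates hP)
  · intro hsurj
    obtain ⟨P, hP⟩ := exists_coordinates_of_surjective_comp <|
      surjective_comp_of_surjective_linearMap ((hmonomial ℚ).1 (hsurj ℚ))
        (padicValUnits_surjective 2)
    exact isSaturated_span_of_coordinates hP
end

section
/- Let k be a field and K = k((t)) the field of formal Laurent series over k, and for a nonzero f ∈ K let v(f) ∈ ℤ denote its t-adic valuation (the order of f). Let s, q be natural numbers, d₁,…,d_s positive integers, and (b_{i,j}) an s×q integer matrix, and for each i let rᵢ ∈ ℤ^{s+q} be the vector whose i-th coordinate is dᵢ, whose other coordinates among the first s are 0, and whose last q coordinates are (b_{i,1},…,b_{i,q}). Suppose the subgroup of ℤ^{s+q} spanned by r₁,…,r_s is not saturated. Then there exists (z₁,…,z_s) ∈ (Kˣ)^s such that for every (y₁,…,y_s) ∈ (Kˣ)^s with dᵢ dividing v(yᵢ) for all i, and every (x₁,…,x_q) ∈ (Kˣ)^q, one has (z₁,…,z_s) ≠ (y₁ x₁^{b_{1,1}}⋯x_q^{b_{1,q}}, …, y_s x₁^{b_{s,1}}⋯x_q^{b_{s,q}}). -/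
/-- The pairing functional used to extract coefficients. -/
def pairF (s q : ℕ) (c : Fin s ⊕ Fin q → ℤ) :
    ((Fin s → ℤ) × (Fin q → ℤ)) →ₗ[ℤ] ℤ where
  toFun p := ∑ i, p.1 i * c (Sum.inl i) + ∑ j, p.2 j * c (Sum.inr j)
  map_add' p p' := by
    simp only [Prod.fst_add, Prod.snd_add, Pi.add_apply, add_mul, Finset.sum_add_distrib]
    ring
  map_smul' m p := by
    simp only [Prod.smul_fst, Prod.smul_snd, Pi.smul_apply, smul_eq_mul, mul_assoc,
      Finset.mul_sum, RingHom.id_apply, mul_add]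

/-- The order of a unit of Laurent series, as a monoid hom to `Multiplicative ℤ`. -/
noncomputable def ordHom (k : Type) [Field k] : (LaurentSeries k)ˣ →* Multiplicative ℤ where
  toFun u := Multiplicative.ofAdd (u : LaurentSeries k).order
  map_one' := by simp
  map_mul' u v := by
    simp only [Units.val_mul, HahnSeries.order_mul u.ne_zero v.ne_zero, ofAdd_add]



/-- Let `k` be a field and `K = k((t))` the field of formal Laurent series
over `k`; for a nonzero `f ∈ K` its `t`-adic valuation is its order `f.order ∈ ℤ`.
Let `d₁, …, d_s` be positive integers, `(b i j)` an `s × q` integer matrix, and for each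
`i` let `rᵢ ∈ ℤ^(s+q)` be the vector whose `i`-th coordinate is `dᵢ`, whose other
coordinates among the first `s` are `0`, and whose last `q` coordinates are
`(b i 1, …, b i q)`. If the subgroup of `ℤ^(s+q)` spanned by `r₁, …, r_s` is not
saturated, then there exists `(z₁, …, z_s) ∈ (Kˣ)^s` such that for every
`(y₁, …, y_s) ∈ (Kˣ)^s` with `dᵢ ∣ v(yᵢ)` for every `i`, and every
`(x₁, …, x_q) ∈ (Kˣ)^q`, one has
`(z₁, …, z_s) ≠ (y₁ x₁^{b₁₁} ⋯ x_q^{b₁q}, …, y_s x₁^{b_s1} ⋯ x_q^{b_sq})`. -/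
theorem monomial_map_not_surjective_of_not_saturated (k : Type) [Field k]
    (s q : ℕ) (d : Fin s → ℤ) (hd : ∀ i, 0 < d i) (b : Fin s → Fin q → ℤ)
    (hns : ¬ ∀ (m : ℤ) (v : (Fin s → ℤ) × (Fin q → ℤ)), m ≠ 0 →
        m • v ∈ Submodule.span ℤ
          (Set.range fun i : Fin s => ((Pi.single i (d i) : Fin s → ℤ), b i)) →
        v ∈ Submodule.span ℤ
          (Set.range fun i : Fin s => ((Pi.single i (d i) : Fin s → ℤ), b i))) :
    ∃ z : Fin s → (LaurentSeries k)ˣ,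
      ∀ (y : Fin s → (LaurentSeries k)ˣ) (x : Fin q → (LaurentSeries k)ˣ),
        (∀ i, d i ∣ (y i : LaurentSeries k).order) →
        z ≠ fun i : Fin s => y i * ∏ j : Fin q, x j ^ b i j := by
  push_neg at hns
  obtain ⟨m, v, hm, hmv, hv⟩ := hns
  set r : Fin s → (Fin s → ℤ) × (Fin q → ℤ) :=
    fun i => ((Pi.single i (d i) : Fin s → ℤ), b i) with hrdef
  set g : (Fin s ⊕ Fin q) → (Fin s → ℤ) :=
    Sum.elim (fun i => (Pi.single i (d i) : Fin s → ℤ)) (fun j i => b i j) with hgdef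
  by_cases hM : ∀ w : Fin s → ℤ, w ∈ Submodule.span ℤ (Set.range g)
  · -- then the lattice is saturated: contradiction
    exfalso
    apply hv
    have hc : ∀ i : Fin s, ∃ c : Fin s ⊕ Fin q → ℤ,
        ∑ t, c t • g t = (Pi.single i 1 : Fin s → ℤ) := fun i =>
      (Submodule.mem_span_range_iff_exists_fun ℤ).1 (hM _)
    choose c hcc using hc
    have hpair : ∀ i i' : Fin s, pairF s q (c i) (r i') = (Pi.single i 1 : Fin s → ℤ) i' := by
      intro i i'
      have h0 : c i (Sum.inl i') * d i' + ∑ j, c i (Sum.inr j) * b i' j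
          = (Pi.single i 1 : Fin s → ℤ) i' := by
        have h1 := congrFun (hcc i) i'
        rw [hgdef, Fintype.sum_sum_type] at h1
        simpa [Finset.sum_apply, Pi.single_apply, Finset.sum_ite_eq', mul_comm] using h1
      rw [← h0, hrdef]
      simp only [pairF, LinearMap.coe_mk, AddHom.coe_mk]
      simp [Pi.single_apply, Finset.sum_ite_eq', mul_comm]
    obtain ⟨a, ha⟩ := (Submodule.mem_span_range_iff_exists_fun ℤ).1 hmv
    have key : ∀ i, a i = m * pairF s q (c i) v := by
      intro i
      have h1 : pairF s q (c i) (∑ i', a i' • r i') = a i := by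
        rw [map_sum]
        simp only [map_smul, smul_eq_mul, hpair]
        rw [Finset.sum_eq_single i]
        · simp
        · intro t _ ht; simp [Pi.single_apply, Ne.symm ht]
        · simp
      rw [← h1, ha, map_smul, smul_eq_mul]
    have hv' : m • (∑ i, pairF s q (c i) v • r i) = m • v := by
      rw [← ha, Finset.smul_sum]
      refine Finset.sum_congr rfl fun i _ => ?_
      rw [key i, smul_smul]
    have hinj := smul_right_injective ((Fin s → ℤ) × (Fin q → ℤ)) hm hv'
    rw [← hinj]
    exact Submodule.sum_smul_mem _ _ fun i _ => Submodule.subset_span ⟨i, rfl⟩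
  · push_neg at hM
    obtain ⟨w, hw⟩ := hM
    refine ⟨fun i => Units.mk0 (HahnSeries.single (w i) (1 : k)) (by simp), ?_⟩
    intro y x hy heq
    apply hw
    rw [Submodule.mem_span_range_iff_exists_fun]
    choose a ha using hy
    refine ⟨Sum.elim a (fun j => (x j : LaurentSeries k).order), ?_⟩
    funext i
    have horder : w i = (y i : LaurentSeries k).order
        + ∑ j, b i j * (x j : LaurentSeries k).order := by
      have h1 := congrFun heq i
      have h2 := congrArg (fun u => Multiplicative.toAdd (ordHom k u)) h1
      simp only [map_mul, map_prod, map_zpow, toAdd_mul, toAdd_prod, toAdd_zpow] at h2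
      simpa [ordHom, HahnSeries.order_single (one_ne_zero (α := k))] using h2
    rw [hgdef, Fintype.sum_sum_type]
    simp only [Sum.elim_inl, Sum.elim_inr]
    have : (∑ i' : Fin s, a i' • (Pi.single i' (d i') : Fin s → ℤ)
        + ∑ j, (x j : LaurentSeries k).order • (fun i => b i j)) i
        = a i * d i + ∑ j, (x j : LaurentSeries k).order * b i j := by
      simp [Finset.sum_apply, Pi.single_apply, Finset.sum_ite_eq', mul_comm]
    rw [this, horder, ha i]
    ring_nf
    rw [Finset.sum_congr rfl fun j _ => mul_comm (b i j) ((x j : LaurentSeries k).order)]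
end
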